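/- Let D be a dyadic grid, Q₀ ∈ D, 0 < α < n, and f ≥ 0 integrable on Q₀ with f finite a.e. Build a stopping collection S ⊆ D recursively: Q₀ ∈ S, and for each minimal P ∈ S, add to S all maximal Q ⊊ P in D with |Q|^{α/n}⟨f⟩_Q > 4|P|^{α/n}⟨f⟩_P. Then S is sparse: for every S ∈ S, ∑_{Q ∈ ch(S)} |Q| ≤ |S|/2, where ch(S) denotes the maximal S-descendants of S; consequently |S| ≤ 2|E_S| where E_S = S \ ⋃ ch(S). -/

import Mathlib

open MeasureTheory Set ENNReal

noncomputable section

/-- An axis-parallel cube in `ℝⁿ`. -/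
structure Cube (n : ℕ) where
  corner : Fin n → ℝ
  side : ℝ
  side_pos : 0 < side

namespace Cube

/-- The underlying (half-open) set of a cube. -/
def toSet {n : ℕ} (Q : Cube n) : Set (Fin n → ℝ) :=
  {x | ∀ i, Q.corner i ≤ x i ∧ x i < Q.corner i + Q.side}

/-- The volume `|Q| = side^n` of a cube. -/
def vol {n : ℕ} (Q : Cube n) : ℝ := Q.side ^ n

end Cube

/-- A dyadic grid: cubes of dyadic side lengths, nested or disjoint, partitioning `ℝⁿ`
at every scale. -/
def IsDyadicGrid {n : ℕ} (D : Set (Cube n)) : Prop :=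
  (∀ Q ∈ D, ∃ k : ℤ, Q.side = 2 ^ k) ∧
  (∀ Q ∈ D, ∀ R ∈ D, (Q.toSet ∩ R.toSet).Nonempty →
      Q.toSet ⊆ R.toSet ∨ R.toSet ⊆ Q.toSet) ∧
  (∀ k : ℤ, (⋃ Q ∈ {Q ∈ D | Q.side = 2 ^ k}, Q.toSet) = univ)

/-- The average `⟨f⟩_Q^μ = (1/μ(Q)) ∫_Q f dμ`. -/
def avg {n : ℕ} (μ : Measure (Fin n → ℝ)) (f : (Fin n → ℝ) → ℝ≥0∞) (Q : Cube n) : ℝ≥0∞ :=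
  (∫⁻ x in Q.toSet, f x ∂μ) / μ Q.toSet

/-- The Lebesgue average `⟨f⟩_Q = (1/|Q|) ∫_Q f`. -/
def lebAvg {n : ℕ} (f : (Fin n → ℝ) → ℝ≥0∞) (Q : Cube n) : ℝ≥0∞ :=
  (∫⁻ x in Q.toSet, f x) / ENNReal.ofReal Q.vol

/-- `σ(Q) = ∫_Q σ dx`. -/
def wt {n : ℕ} (σ : (Fin n → ℝ) → ℝ≥0∞) (Q : Cube n) : ℝ≥0∞ :=
  ∫⁻ x in Q.toSet, σ x

/-- The weighted average `⟨f⟩_Q^σ = (1/σ(Q)) ∫_Q f σ dx`. -/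
def avgw {n : ℕ} (σ f : (Fin n → ℝ) → ℝ≥0∞) (Q : Cube n) : ℝ≥0∞ :=
  (∫⁻ x in Q.toSet, f x * σ x) / wt σ Q

/-- The dyadic fractional maximal operator `M_α^D`. -/
def dyFracMax {n : ℕ} (D : Set (Cube n)) (α : ℝ) (f : (Fin n → ℝ) → ℝ≥0∞)
    (x : Fin n → ℝ) : ℝ≥0∞ :=
  ⨆ (Q : Cube n) (_ : Q ∈ D) (_ : x ∈ Q.toSet),
    ENNReal.ofReal (Q.vol ^ (α / (n : ℝ))) * lebAvg f Q

/-- The fractional maximal operator `M_α` (supremum over all cubes). -/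
def fracMax {n : ℕ} (α : ℝ) (f : (Fin n → ℝ) → ℝ≥0∞) (x : Fin n → ℝ) : ℝ≥0∞ :=
  ⨆ (Q : Cube n) (_ : x ∈ Q.toSet), ENNReal.ofReal (Q.vol ^ (α / (n : ℝ))) * lebAvg f Q

/-- The Hardy–Littlewood maximal operator (over all cubes). -/
def hlMax {n : ℕ} (f : (Fin n → ℝ) → ℝ≥0∞) (x : Fin n → ℝ) : ℝ≥0∞ :=
  ⨆ (Q : Cube n) (_ : x ∈ Q.toSet), lebAvg f Q

/-- The entropy functional `ρ_σ(Q) = (1/σ(Q)) ∫_Q M(σ 1_Q)`. -/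
def entropy {n : ℕ} (σ : (Fin n → ℝ) → ℝ≥0∞) (Q : Cube n) : ℝ≥0∞ :=
  (∫⁻ x in Q.toSet, hlMax (Q.toSet.indicator σ) x) / wt σ Q

/-- The fractional integral operator `I_α f (x) = ∫ f(y) |x-y|^{α-n} dy`. -/
def fracInt {n : ℕ} (α : ℝ) (f : (Fin n → ℝ) → ℝ≥0∞) (x : Fin n → ℝ) : ℝ≥0∞ :=
  ∫⁻ y, f y * ENNReal.ofReal (Real.sqrt (∑ i, (x i - y i) ^ 2) ^ (α - (n : ℝ)))

/-- `Q` is a maximal element of `S` strictly contained in `P`. -/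
def IsMaxChild {n : ℕ} (S : Set (Cube n)) (P Q : Cube n) : Prop :=
  Q ∈ S ∧ Q.toSet ⊂ P.toSet ∧
    ∀ R ∈ S, R.toSet ⊂ P.toSet → Q.toSet ⊆ R.toSet → R.toSet ⊆ Q.toSet

/-- A sparse collection of cubes: the maximal elements strictly inside any `P` in the
collection have total volume at most `|P|/2`. -/
def IsSparse {n : ℕ} (S : Set (Cube n)) : Prop :=
  ∀ P ∈ S, (∑' Q : {Q : Cube n // IsMaxChild S P Q}, ENNReal.ofReal Q.1.vol)
      ≤ ENNReal.ofReal P.vol / 2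

/-- `P` is the `S`-parent of `Q`: the minimal element of `S` containing `Q`. -/
def IsSParent {n : ℕ} (S : Set (Cube n)) (Q P : Cube n) : Prop :=
  P ∈ S ∧ Q.toSet ⊆ P.toSet ∧ ∀ R ∈ S, Q.toSet ⊆ R.toSet → P.toSet ⊆ R.toSet

/-- The separated-bump entropy functional
`ϱ_σ^{α,p,q}(Q) = σ(Q)^{-q/p} ∫_Q M_α(1_Q σ)^{q/p}`. -/
def sepRho {n : ℕ} (α p q : ℝ) (σ : (Fin n → ℝ) → ℝ≥0∞) (Q : Cube n) : ℝ≥0∞ :=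
  (∫⁻ x in Q.toSet, fracMax α (Q.toSet.indicator σ) x ^ (q / p)) / wt σ Q ^ (q / p)

/-- The separated entropy bump constant `[[σ,w]]_{α,p,q}` with bump function `ε`. -/
def sepBump {n : ℕ} (α p q : ℝ) (ε : ℝ → ℝ) (σ w : (Fin n → ℝ) → ℝ≥0∞) : ℝ≥0∞ :=
  ⨆ Q : Cube n,
    (ENNReal.ofReal (Q.vol ^ (α / (n : ℝ))) * lebAvg σ Q) ^ (q * (1 - 1 / p)) *
      lebAvg w Q * sepRho α p q σ Q * ENNReal.ofReal (ε (sepRho α p q σ Q).toReal)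

/-- The one-bump entropy quantity for the fractional maximal operator:
`β(Q) = |Q|^{α/n-1} σ(Q)^{1/p'} w(Q)^{1/q} ρ_σ(Q)^{1/p} ε_q(ρ_σ(Q))`. -/
def maxBump {n : ℕ} (α p q : ℝ) (εq : ℝ → ℝ) (σ w : (Fin n → ℝ) → ℝ≥0∞)
    (Q : Cube n) : ℝ≥0∞ :=
  ENNReal.ofReal (Q.vol ^ (α / (n : ℝ) - 1)) * wt σ Q ^ (1 - 1 / p) * wt w Q ^ (1 / q) *
    entropy σ Q ^ (1 / p) * ENNReal.ofReal (εq (entropy σ Q).toReal)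

/-- The one-bump entropy quantity for the fractional integral operator:
`β(Q) = |Q|^{α/n-1} σ(Q)^{1/p'} w(Q)^{1/q} ρ_σ(Q)^{1/p} ε_p(ρ_σ(Q)) ρ_w(Q)^{1/q'} ε_{q'}(ρ_w(Q))`. -/
def intBump {n : ℕ} (α p q : ℝ) (εp εq' : ℝ → ℝ) (σ w : (Fin n → ℝ) → ℝ≥0∞)
    (Q : Cube n) : ℝ≥0∞ :=
  ENNReal.ofReal (Q.vol ^ (α / (n : ℝ) - 1)) * wt σ Q ^ (1 - 1 / p) * wt w Q ^ (1 / q) *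
    entropy σ Q ^ (1 / p) * ENNReal.ofReal (εp (entropy σ Q).toReal) *
    entropy w Q ^ (1 - 1 / q) * ENNReal.ofReal (εq' (entropy w Q).toReal)

/-- The stopping children of `P`: maximal `Q ⊊ P` in `D` with
`|Q|^{α/n}⟨f⟩_Q > 4 |P|^{α/n}⟨f⟩_P`. -/
def stopChild {n : ℕ} (D : Set (Cube n)) (α : ℝ) (f : (Fin n → ℝ) → ℝ≥0∞)
    (P Q : Cube n) : Prop :=
  Q ∈ D ∧ Q.toSet ⊂ P.toSet ∧
    4 * (ENNReal.ofReal (P.vol ^ (α/(n:ℝ))) * lebAvg f P) <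
      ENNReal.ofReal (Q.vol ^ (α/(n:ℝ))) * lebAvg f Q ∧
    ∀ R ∈ D, R.toSet ⊂ P.toSet →
      4 * (ENNReal.ofReal (P.vol ^ (α/(n:ℝ))) * lebAvg f P) <
        ENNReal.ofReal (R.vol ^ (α/(n:ℝ))) * lebAvg f R →
      Q.toSet ⊆ R.toSet → R.toSet ⊆ Q.toSet

/-!
A stopping child `Q ⊊ P` has `|Q|^{α/n} ≤ |P|^{α/n}` since `α ≥ 0`, so its stopping condition
forces `⟨f⟩_Q > 4⟨f⟩_P`. By dyadic nesting and maximality distinct children are disjoint, hence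
`4⟨f⟩_P ∑ |Q| ≤ ∑ ∫_Q f ≤ ∫_P f = ⟨f⟩_P |P|`, i.e. `∑ |Q| ≤ |P|/4`. When `⟨f⟩_P` is `0` or `∞`
there are no children at all. Disjointness also makes the children countable, so their union has
measure at most `|P|/2`, which gives `|P| ≤ 2|E_P|`.
-/

open Function

namespace Cube

variable {n : ℕ}

lemma vol_pos (Q : Cube n) : 0 < Q.vol := pow_pos Q.side_pos n

lemma corner_mem_toSet (Q : Cube n) : Q.corner ∈ Q.toSet :=
  fun _ => ⟨le_rfl, lt_add_of_pos_right _ Q.side_pos⟩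

lemma toSet_eq_pi (Q : Cube n) :
    Q.toSet = Set.pi univ fun i => Ico (Q.corner i) (Q.corner i + Q.side) := by
  ext x
  simp [toSet, Set.mem_pi]

lemma measurableSet_toSet (Q : Cube n) : MeasurableSet Q.toSet := by
  rw [toSet_eq_pi]
  exact MeasurableSet.univ_pi fun _ => measurableSet_Ico

lemma volume_toSet (Q : Cube n) : volume Q.toSet = ENNReal.ofReal Q.vol := by
  rw [toSet_eq_pi, volume_pi_pi]
  simp only [Real.volume_Ico, add_sub_cancel_left, Finset.prod_const, Finset.card_univ,
    Fintype.card_fin, vol, ENNReal.ofReal_pow Q.side_pos.le]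

lemma volume_toSet_ne_zero (Q : Cube n) : volume Q.toSet ≠ 0 := by
  simpa [volume_toSet] using Q.vol_pos

lemma volume_toSet_ne_top (Q : Cube n) : volume Q.toSet ≠ ∞ := by
  simp [volume_toSet]

lemma image_eval_toSet (Q : Cube n) (i : Fin n) :
    Function.eval i '' Q.toSet = Ico (Q.corner i) (Q.corner i + Q.side) := by
  rw [toSet_eq_pi]
  exact eval_image_univ_pi (toSet_eq_pi Q ▸ ⟨Q.corner, Q.corner_mem_toSet⟩)

lemma toSet_injective (hn : n ≠ 0) : Function.Injective (toSet (n := n)) := by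
  intro Q R h
  have hIco (i : Fin n) :
      Q.corner i = R.corner i ∧ Q.corner i + Q.side = R.corner i + R.side := by
    refine (Ico_eq_Ico_iff (Or.inl (lt_add_of_pos_right _ Q.side_pos))).1 ?_
    rw [← image_eval_toSet, ← image_eval_toSet, h]
  have hcorner : Q.corner = R.corner := funext fun i => (hIco i).1
  have hside : Q.side = R.side := by
    obtain ⟨hc, hs⟩ := hIco ⟨0, Nat.pos_of_ne_zero hn⟩
    linarith
  cases Q
  cases R
  simp_all

lemma vol_le_of_toSet_subset {Q R : Cube n} (h : Q.toSet ⊆ R.toSet) : Q.vol ≤ R.vol := by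
  have := measure_mono (μ := volume) h
  rwa [volume_toSet, volume_toSet, ENNReal.ofReal_le_ofReal_iff R.vol_pos.le] at this

end Cube

lemma lebAvg_eq_setLAverage {n : ℕ} (f : (Fin n → ℝ) → ℝ≥0∞) (Q : Cube n) :
    lebAvg f Q = ⨍⁻ x in Q.toSet, f x ∂volume := by
  rw [lebAvg, setLAverage_eq, Cube.volume_toSet]

section Stopping

variable {X ι : Type*} [MeasurableSpace X] {μ : Measure X} {f : X → ℝ≥0∞} {P : Set X}
  {Q : ι → Set X}

lemma tsum_setLIntegral_le_of_pairwise_disjoint (hPm : MeasurableSet P)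
    (hQ : ∀ i, MeasurableSet (Q i)) (hQP : ∀ i, Q i ⊆ P) (hdisj : Pairwise (Disjoint on Q)) :
    ∑' i, ∫⁻ x in Q i, f x ∂μ ≤ ∫⁻ x in P, f x ∂μ := calc
  ∑' i, ∫⁻ x in Q i, f x ∂μ = ∑' i, μ.withDensity f (Q i) :=
    tsum_congr fun i => (withDensity_apply f (hQ i)).symm
  _ ≤ μ.withDensity f (⋃ i, Q i) := tsum_meas_le_meas_iUnion_of_disjoint _ hQ hdisj
  _ ≤ μ.withDensity f P := measure_mono (iUnion_subset hQP)
  _ = ∫⁻ x in P, f x ∂μ := withDensity_apply f hPm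

lemma tsum_measure_le_div_of_mul_setLAverage_lt {c : ℝ≥0∞} (hc : c ≠ 0)
    (hPm : MeasurableSet P) (hP : μ P ≠ ∞)
    (hQ : ∀ i, MeasurableSet (Q i)) (hQP : ∀ i, Q i ⊆ P) (hdisj : Pairwise (Disjoint on Q))
    (hlt : ∀ i, c * ⨍⁻ x in P, f x ∂μ < ⨍⁻ x in Q i, f x ∂μ) :
    ∑' i, μ (Q i) ≤ μ P / c := by
  rcases isEmpty_or_nonempty ι with hι | ⟨⟨i₀⟩⟩
  · simp
  set a := ⨍⁻ x in P, f x ∂μ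
  have ha_top : a ≠ ∞ := by
    intro ha
    simpa [ha, ENNReal.mul_top hc] using hlt i₀
  have ha_zero : a ≠ 0 := by
    intro ha
    have hP0 : ∫⁻ x in P, f x ∂μ = 0 := by
      simpa [a, ha] using (measure_mul_setLAverage f hP).symm
    have hQ0 : ∫⁻ x in Q i₀, f x ∂μ = 0 :=
      le_antisymm (hP0 ▸ lintegral_mono_set (hQP i₀)) zero_le
    simpa [ha, setLAverage_eq, hQ0] using hlt i₀
  have hmass : c * a * ∑' i, μ (Q i) ≤ a * μ P := calc
    c * a * ∑' i, μ (Q i) = ∑' i, c * a * μ (Q i) := ENNReal.tsum_mul_left.symm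
    _ ≤ ∑' i, ∫⁻ x in Q i, f x ∂μ := ENNReal.tsum_le_tsum fun i =>
      ENNReal.mul_le_of_le_div ((hlt i).le.trans_eq (setLAverage_eq μ f (Q i)))
    _ ≤ ∫⁻ x in P, f x ∂μ := tsum_setLIntegral_le_of_pairwise_disjoint hPm hQ hQP hdisj
    _ = a * μ P := by rw [mul_comm, measure_mul_setLAverage f hP]
  rw [ENNReal.le_div_iff_mul_le (Or.inl hc) (Or.inr hP), mul_comm]
  refine (ENNReal.mul_le_mul_iff_right ha_zero ha_top).1 ?_
  rwa [mul_left_comm, ← mul_assoc]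

lemma countable_of_pairwise_disjoint_measure_ne_zero [SFinite μ]
    (hQ : ∀ i, MeasurableSet (Q i)) (hQ0 : ∀ i, μ (Q i) ≠ 0)
    (hdisj : Pairwise (Disjoint on Q)) : Countable ι := by
  have := Measure.countable_meas_pos_of_disjoint_iUnion (μ := μ) hQ hdisj
  exact countable_univ_iff.1 (by simpa [pos_iff_ne_zero, hQ0] using this)

lemma measure_le_two_mul_measure_diff_iUnion [Countable ι] (hP : μ P ≠ ∞)
    (hsum : ∑' i, μ (Q i) ≤ μ P / 2) : μ P ≤ 2 * μ (P \ ⋃ i, Q i) := calc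
  μ P = 2 * (μ P - μ P / 2) := by
    rw [ENNReal.sub_half hP, ENNReal.mul_div_cancel two_ne_zero ofNat_ne_top]
  _ ≤ 2 * (μ P - μ (⋃ i, Q i)) := by gcongr; exact (measure_iUnion_le Q).trans hsum
  _ ≤ 2 * μ (P \ ⋃ i, Q i) := by gcongr; exact le_measure_sdiff

end Stopping

namespace stopChild

variable {n : ℕ} {D : Set (Cube n)} {α : ℝ} {f : (Fin n → ℝ) → ℝ≥0∞} {P Q : Cube n}

lemma four_mul_lebAvg_lt (hα : 0 ≤ α) (h : stopChild D α f P Q) :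
    4 * lebAvg f P < lebAvg f Q := by
  obtain ⟨-, hQP, hlt, -⟩ := h
  set cP := ENNReal.ofReal (P.vol ^ (α / (n : ℝ)))
  have hcQ : ENNReal.ofReal (Q.vol ^ (α / (n : ℝ))) ≤ cP := ENNReal.ofReal_le_ofReal <|
    Real.rpow_le_rpow Q.vol_pos.le (Cube.vol_le_of_toSet_subset hQP.subset) (by positivity)
  have : cP * (4 * lebAvg f P) < cP * lebAvg f Q := by
    rw [mul_left_comm]
    exact hlt.trans_le (mul_le_mul_left hcQ _)
  exact lt_of_mul_lt_mul_left' this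

lemma pairwise_disjoint (hn : n ≠ 0) (hD : IsDyadicGrid D) :
    Pairwise (Disjoint on fun Q : {Q : Cube n // stopChild D α f P Q} => Q.1.toSet) := by
  rintro ⟨Q, hQD, hQP, hQ, hQmax⟩ ⟨R, hRD, hRP, hR, hRmax⟩ hne
  by_contra hmeet
  refine hne (Subtype.ext (Cube.toSet_injective hn ?_))
  rcases hD.2.1 Q hQD R hRD (not_disjoint_iff_nonempty_inter.1 hmeet) with hsub | hsub
  · exact hsub.antisymm (hQmax R hRD hRP hR hsub)
  · exact (hRmax Q hQD hQP hQ hsub).antisymm hsub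

end stopChild

theorem stmt5_general (n : ℕ) (α : ℝ) (hα : 0 < α) (hαn : α < n)
    (D : Set (Cube n)) (hD : IsDyadicGrid D) (Q₀ : Cube n)
    (f : (Fin n → ℝ) → ℝ≥0∞) :
    ∀ P ∈ D, P.toSet ⊆ Q₀.toSet →
      (∑' Q : {Q : Cube n // stopChild D α f P Q}, ENNReal.ofReal Q.1.vol)
          ≤ ENNReal.ofReal P.vol / 2 ∧
      ENNReal.ofReal P.vol
          ≤ 2 * volume (P.toSet \ ⋃ Q ∈ {Q | stopChild D α f P Q}, Cube.toSet Q) := by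
  intro P _ _
  have hn : n ≠ 0 := by
    rintro rfl
    exact hα.not_gt (by simpa using hαn)
  have hdisj := stopChild.pairwise_disjoint (α := α) (f := f) (P := P) hn hD
  have hsparse : ∑' Q : {Q : Cube n // stopChild D α f P Q}, volume Q.1.toSet
      ≤ volume P.toSet / 2 := by
    refine (tsum_measure_le_div_of_mul_setLAverage_lt (f := f) four_ne_zero P.measurableSet_toSet
      P.volume_toSet_ne_top (fun Q => Q.1.measurableSet_toSet) (fun Q => Q.2.2.1.subset) hdisj
      fun Q => ?_).trans (ENNReal.div_le_div_left (by norm_num) _)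
    simpa only [lebAvg_eq_setLAverage] using Q.2.four_mul_lebAvg_lt hα.le
  have : Countable {Q : Cube n // stopChild D α f P Q} :=
    countable_of_pairwise_disjoint_measure_ne_zero (fun Q => Q.1.measurableSet_toSet)
      (fun Q => Q.1.volume_toSet_ne_zero) hdisj
  refine ⟨by simpa only [Cube.volume_toSet] using hsparse, ?_⟩
  rw [← P.volume_toSet, biUnion_eq_iUnion]
  exact measure_le_two_mul_measure_diff_iUnion (ι := {Q : Cube n // stopChild D α f P Q})
    P.volume_toSet_ne_top hsparse

/-- the stopping collection built from fractional-average stopping is sparse: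
at every node `P` of the stopping tree the stopping children have total volume at most
`|P|/2`, and consequently `|P| ≤ 2|E_P|`. -/
theorem stmt5 (n : ℕ) (α : ℝ) (hα : 0 < α) (hαn : α < n)
    (D : Set (Cube n)) (hD : IsDyadicGrid D) (Q₀ : Cube n) (hQ₀ : Q₀ ∈ D)
    (f : (Fin n → ℝ) → ℝ≥0∞) (hf : Measurable f)
    (hfin : (∫⁻ x in Q₀.toSet, f x) ≠ ∞) (hae : ∀ᵐ x, f x ≠ ∞) :
    ∀ P ∈ D, P.toSet ⊆ Q₀.toSet →
      (∑' Q : {Q : Cube n // stopChild D α f P Q}, ENNReal.ofReal Q.1.vol)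
          ≤ ENNReal.ofReal P.vol / 2 ∧
      ENNReal.ofReal P.vol
          ≤ 2 * volume (P.toSet \ ⋃ Q ∈ {Q | stopChild D α f P Q}, Cube.toSet Q) :=
  stmt5_general n α hα hαn D hD Q₀ f
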